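/- arXiv:2310.03528 — 8 statements merged into one kernel-verified Lean document; each statement's English description precedes it below -/
import Mathlib

section
/- For any probability vector (p_1,...,p_n) with p_i ≥ 0 and ∑ p_i = 1 and n ≥ 2, there exists k ∈ {1,...,n} such that at least k of the indices i satisfy p_i ≥ 1/(4·k·log₂(n)). -/
/-- For any probability vector `p` of length `n ≥ 2` with nonnegative entries summing
to `1`, there exists `k ∈ {1, …, n}` such that at least `k` indices `i` satisfy
`p i ≥ 1 / (4 k log₂ n)`. -/
theorem stmt_0 (n : ℕ) (hn : 2 ≤ n) (p : Fin n → ℝ)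
    (hp : ∀ i, 0 ≤ p i) (hsum : ∑ i, p i = 1) :
    ∃ k : ℕ, 1 ≤ k ∧ k ≤ n ∧
      k ≤ Set.ncard {i : Fin n | 1 / (4 * k * Real.logb 2 n) ≤ p i} := by
  by_contra hcon
  push_neg at hcon
  set L : ℝ := Real.logb 2 n with hLdef
  have hL1 : 1 ≤ L := by
    rw [hLdef, Real.le_logb_iff_rpow_le one_lt_two (by positivity)]
    simpa using (by exact_mod_cast hn : (2:ℝ) ≤ n)
  have hL0 : 0 < L := lt_of_lt_of_le one_pos hL1
  set σ := Tuple.sort p with hσ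
  set q : Fin n → ℝ := p ∘ σ with hq
  have hmono : Monotone q := Tuple.monotone_sort p
  have hqsum : ∑ i, q i = 1 := by
    rw [hq]; rw [← hsum]; exact Equiv.sum_comp σ p
  have hcard : ∀ t : ℝ, Set.ncard {i : Fin n | t ≤ p i}
      = (Finset.univ.filter (fun i => t ≤ q i)).card := by
    intro t
    rw [Set.ncard_eq_toFinset_card', Set.toFinset_setOf]
    rw [← Fintype.card_subtype, ← Fintype.card_subtype]
    exact Fintype.card_congr
      (Equiv.subtypeEquiv σ (fun a => Iff.rfl) : {a // t ≤ q a} ≃ {b // t ≤ p b}).symm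
  have key : ∀ j : Fin n, q j < 1 / (4 * (n - j.val : ℕ) * L) := by
    intro j
    set k : ℕ := n - j.val with hk
    have hk1 : 1 ≤ k := Nat.le_sub_of_add_le (by omega)
    have hkn : k ≤ n := Nat.sub_le _ _
    by_contra hc
    push_neg at hc
    have hsub : Finset.Ici j ⊆ Finset.univ.filter (fun i => 1 / (4 * (k:ℕ) * L) ≤ q i) := by
      intro i hi
      simp only [Finset.mem_filter, Finset.mem_univ, true_and]
      exact le_trans hc (hmono (Finset.mem_Ici.mp hi))
    have hcard2 := Finset.card_le_card hsub
    rw [Fin.card_Ici] at hcard2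
    have := hcon k hk1 hkn
    rw [hcard (1 / (4 * (k:ℕ) * L))] at this
    omega
  have hne : (Finset.univ : Finset (Fin n)).Nonempty :=
    ⟨⟨0, by omega⟩, Finset.mem_univ _⟩
  have hlt := Finset.sum_lt_sum_of_nonempty hne (fun j _ => key j)
  rw [hqsum] at hlt
  have hsum2 : ∑ j : Fin n, 1 / (4 * ((n - j.val : ℕ) : ℝ) * L)
      = (4 * L)⁻¹ * (harmonic n : ℝ) := by
    rw [Fin.sum_univ_eq_sum_range (fun j => 1 / (4 * ((n - j : ℕ) : ℝ) * L)) n]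
    rw [← Finset.sum_range_reflect]
    have : (harmonic n : ℝ) = ∑ i ∈ Finset.range n, ((i : ℝ) + 1)⁻¹ := by
      rw [harmonic]; push_cast; exact Finset.sum_congr rfl (fun i _ => by ring_nf)
    rw [this, Finset.mul_sum]
    apply Finset.sum_congr rfl
    intro i hi
    have hi' : i < n := Finset.mem_range.mp hi
    have h1 : n - (n - 1 - i) = i + 1 := by omega
    rw [h1]
    push_cast
    field_simp
  rw [hsum2] at hlt
  have hH : (harmonic n : ℝ) ≤ 2 * L := by
    have h2 := harmonic_le_one_add_log n
    have hlog2 : Real.log 2 ≤ 1 := by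
      have := Real.log_le_sub_one_of_pos (by norm_num : (0:ℝ) < 2)
      linarith
    have hlogn : Real.log n ≤ L := by
      have : L * Real.log 2 = Real.log n := by
        rw [hLdef, Real.logb]
        field_simp
      nlinarith [Real.log_nonneg (by exact_mod_cast (by omega : 1 ≤ n) : (1:ℝ) ≤ n)]
    linarith
  have h1 : (4*L) * ((4*L)⁻¹ * (harmonic n : ℝ)) = (harmonic n : ℝ) := by
    field_simp
  nlinarith [hlt, hH, hL0, h1]
end

section
/- Let (z_t) be a sequence in [1/2, 1) with z_{t+1} ≥ √(z_t)·(2 − √(z_t)) and z_{t+1} > z_t for all t. Define ζ_t = 1 − √(z_t). Then ζ_{t+1} ≤ ζ_t² for all t, and consequently ζ_t ≤ ζ_0^{2^t}. -/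
/-- For a sequence `z` in `[1/2, 1)` with `z (t+1) ≥ √(z t) (2 - √(z t))` and
`z (t+1) > z t`, the quantity `ζ t = 1 - √(z t)` satisfies `ζ (t+1) ≤ (ζ t)^2`
and hence `ζ t ≤ (ζ 0)^(2^t)`. -/
theorem stmt_2 (z : ℕ → ℝ)
    (hmem : ∀ t, z t ∈ Set.Ico (1 / 2 : ℝ) 1)
    (hrec : ∀ t, Real.sqrt (z t) * (2 - Real.sqrt (z t)) ≤ z (t + 1))
    (hinc : ∀ t, z t < z (t + 1)) :
    (∀ t, (1 - Real.sqrt (z (t + 1))) ≤ (1 - Real.sqrt (z t)) ^ 2) ∧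
    (∀ t, (1 - Real.sqrt (z t)) ≤ (1 - Real.sqrt (z 0)) ^ (2 ^ t)) := by
  have hz0 : ∀ t, (0 : ℝ) ≤ z t := fun t => le_trans (by norm_num) (hmem t).1
  have hz1 : ∀ t, z t ≤ 1 := fun t => le_of_lt (hmem t).2
  have hsqle1 : ∀ t, Real.sqrt (z t) ≤ 1 := fun t =>
    Real.sqrt_le_one.mpr (hz1 t)
  have hsq : ∀ t, z t ≤ Real.sqrt (z t) := by
    intro t
    nlinarith [Real.sq_sqrt (hz0 t), Real.sqrt_nonneg (z t), hsqle1 t]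
  have hstep : ∀ t, (1 - Real.sqrt (z (t + 1))) ≤ (1 - Real.sqrt (z t)) ^ 2 := by
    intro t
    have h1 : 1 - z (t + 1) ≤ (1 - Real.sqrt (z t)) ^ 2 := by
      nlinarith [hrec t]
    linarith [hsq (t + 1)]
  refine ⟨hstep, ?_⟩
  intro t
  induction t with
  | zero => simp
  | succ n ih =>
    have hnn : 0 ≤ 1 - Real.sqrt (z n) := by linarith [hsqle1 n]
    calc 1 - Real.sqrt (z (n + 1)) ≤ (1 - Real.sqrt (z n)) ^ 2 := hstep n
      _ ≤ ((1 - Real.sqrt (z 0)) ^ (2 ^ n)) ^ 2 := by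
          apply pow_le_pow_left₀ hnn ih
      _ = (1 - Real.sqrt (z 0)) ^ (2 ^ (n + 1)) := by
          rw [← pow_mul, pow_succ]
end

section
/- In a two-agent homogeneous Tullock contest, where u_i(x_i, v) = x_i/(x_i + v) − (1/4)c(x_i) with c twice differentiable, strictly increasing, weakly convex, c(0) = 0, and c'(1) = 1: for v > 0, the unique best response y = BR(v) (the maximizer over z ≥ 0 of u_i(z,v)) satisfies: (1) if v < 1 then v < y < 1; (2) if v = 1 then y = 1; (3) if v > 1 then y < 1. -/
/-- In a two-agent homogeneous Tullock contest with utility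
`u z v = z/(z+v) - (1/4) c z`, where `c` is twice differentiable, strictly
increasing, weakly convex, `c 0 = 0`, `deriv c 1 = 1`: for `v > 0`, any
maximizer `y ≥ 0` of `u · v` over `[0,∞)` satisfies: if `v < 1` then
`v < y < 1`; if `v = 1` then `y = 1`; if `v > 1` then `y < 1`. -/
theorem stmt_4 (c : ℝ → ℝ) (hc : ContDiff ℝ 2 c)
    (hc' : ∀ z, 0 ≤ z → 0 < deriv c z)
    (hc'' : ∀ z, 0 ≤ z → 0 ≤ deriv (deriv c) z)
    (hc0 : c 0 = 0) (hc1 : deriv c 1 = 1)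
    (v : ℝ) (hv : 0 < v) (y : ℝ) (hy : 0 ≤ y)
    (hmax : ∀ z, 0 ≤ z →
      z / (z + v) - (1 / 4) * c z ≤ y / (y + v) - (1 / 4) * c y) :
    (v < 1 → v < y ∧ y < 1) ∧ (v = 1 → y = 1) ∧ (1 < v → y < 1) := by
  set u : ℝ → ℝ := fun z => z / (z + v) - (1 / 4) * c z with hu
  set g : ℝ → ℝ := fun z => v / (z + v) ^ 2 - (1 / 4) * deriv c z with hgdef
  have hcont_dc : Continuous (deriv c) := hc.continuous_deriv (by norm_num)
  have hdiff_dc : Differentiable ℝ (deriv c) := by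
    have h2 : ContDiff ℝ ((1:ℕ∞)+1) c := by exact_mod_cast hc
    exact ((contDiff_succ_iff_deriv.mp h2).2.2).differentiable (by norm_num)
  have hdiff_c : Differentiable ℝ c := hc.differentiable (by norm_num)
  -- deriv c is monotone on [0,∞)
  have hmono : MonotoneOn (deriv c) (Set.Ici (0:ℝ)) := by
    apply monotoneOn_of_deriv_nonneg (convex_Ici 0) hcont_dc.continuousOn
      hdiff_dc.differentiableOn
    intro x hx
    rw [interior_Ici] at hx
    exact hc'' x hx.le
  -- derivative of u
  have hderiv : ∀ z : ℝ, -v < z → HasDerivAt u (g z) z := by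
    intro z hz
    have hne : z + v ≠ 0 := by intro h; linarith [h]
    have h1 : HasDerivAt (fun w : ℝ => w / (w + v)) (v / (z + v) ^ 2) z := by
      have := (hasDerivAt_id z).div ((hasDerivAt_id z).add_const v) hne
      exact this.congr_deriv (by simp only [id]; ring)
    have h2 : HasDerivAt (fun w => (1/4 : ℝ) * c w) ((1/4) * deriv c z) z :=
      ((hdiff_c z).hasDerivAt).const_mul (1/4)
    exact h1.sub h2
  have hderivu : ∀ z : ℝ, -v < z → deriv u z = g z := fun z hz => (hderiv z hz).deriv
  have hcu : ∀ z : ℝ, -v < z → ContinuousAt u z := fun z hz =>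
    (hderiv z hz).differentiableAt.continuousAt
  -- continuity of g at y
  have hcg : ContinuousAt g y := by
    have h1 : ContinuousAt (fun z : ℝ => v / (z + v) ^ 2) y := by
      apply ContinuousAt.div continuousAt_const (by fun_prop)
      positivity
    exact h1.sub (continuousAt_const.mul hcont_dc.continuousAt)
  -- key 1 : g y ≤ 0
  have key1 : g y ≤ 0 := by
    by_contra h
    push_neg at h
    obtain ⟨ε, hε, hball⟩ := Metric.mem_nhds_iff.mp
      (hcg.preimage_mem_nhds (Ioi_mem_nhds h))
    set b := y + ε / 2 with hb
    have hyb : y < b := by rw [hb]; linarith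
    have hmonu : StrictMonoOn u (Set.Icc y b) := by
      apply strictMonoOn_of_deriv_pos (convex_Icc _ _)
      · intro z hz
        exact (hcu z (by have := hz.1; linarith)).continuousWithinAt
      · intro z hz
        rw [interior_Icc] at hz
        have hz0 : -v < z := by have := hz.1; linarith
        rw [hderivu z hz0]
        have : z ∈ Metric.ball y ε := by
          rw [Metric.mem_ball, Real.dist_eq, abs_lt]
          have hz1 := hz.1
          have hz2 := hz.2
          rw [hb] at hz2
          constructor <;> linarith
        exact hball this
    have h1 : u y < u b := hmonu (Set.left_mem_Icc.mpr hyb.le) (Set.right_mem_Icc.mpr hyb.le) hyb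
    have h2 := hmax b (by linarith)
    simp only [hu] at h1
    linarith
  -- key 2 : 0 < y → 0 ≤ g y
  have key2 : 0 < y → 0 ≤ g y := by
    intro hy0
    by_contra h
    push_neg at h
    obtain ⟨ε, hε, hball⟩ := Metric.mem_nhds_iff.mp
      (hcg.preimage_mem_nhds (Iio_mem_nhds h))
    set a := y - min ε y / 2 with ha
    have hmin : 0 < min ε y := lt_min hε hy0
    have hay : a < y := by rw [ha]; linarith
    have ha0 : 0 ≤ a := by
      have h2 : min ε y ≤ y := min_le_right _ _
      rw [ha]; linarith
    have hmonu : StrictAntiOn u (Set.Icc a y) := by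
      apply strictAntiOn_of_deriv_neg (convex_Icc _ _)
      · intro z hz
        exact (hcu z (by have := hz.1; linarith)).continuousWithinAt
      · intro z hz
        rw [interior_Icc] at hz
        have hz0 : -v < z := by have := hz.1; linarith
        rw [hderivu z hz0]
        have : z ∈ Metric.ball y ε := by
          rw [Metric.mem_ball, Real.dist_eq, abs_lt]
          have h1 := hz.1
          have h2 := hz.2
          have h3 : min ε y ≤ ε := min_le_left _ _
          rw [ha] at h1
          constructor <;> linarith
        exact hball this
    have h1 : u y < u a := hmonu (Set.left_mem_Icc.mpr hay.le) (Set.right_mem_Icc.mpr hay.le) hay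
    have h2 := hmax a ha0
    simp only [hu] at h1
    linarith
  -- g strictly decreasing on [0,∞)
  have ganti : StrictAntiOn g (Set.Ici (0:ℝ)) := by
    intro a ha b hb hab
    simp only [Set.mem_Ici] at ha hb
    have h1 : v / (b + v) ^ 2 < v / (a + v) ^ 2 := by
      have hav : 0 < a + v := by linarith
      apply div_lt_div_of_pos_left hv (by positivity)
      nlinarith
    have h2 : deriv c a ≤ deriv c b := hmono ha hb hab.le
    simp only [hgdef]
    linarith
  -- compute g 1
  have hg1 : g 1 = v / (1 + v) ^ 2 - 1 / 4 := by simp [hgdef, hc1]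
  have hg1neg : v ≠ 1 → g 1 < 0 := by
    intro hne
    rw [hg1]
    have h4 : 4 * v < (1 + v) ^ 2 := by
      rcases lt_or_gt_of_ne hne with h | h <;> nlinarith
    rw [sub_neg, div_lt_iff₀ (by positivity)]
    linarith
  have hlt1 : v ≠ 1 → y < 1 := by
    intro hne
    by_contra h
    push_neg at h
    have hy0 : 0 < y := lt_of_lt_of_le one_pos h
    have hgy := key2 hy0
    have hle : g y ≤ g 1 := by
      rcases eq_or_lt_of_le h with h' | h'
      · rw [← h']
      · exact (ganti (by norm_num) (by simp; linarith) h').le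
    linarith [hg1neg hne]
  refine ⟨?_, ?_, ?_⟩
  · intro hv1
    refine ⟨?_, hlt1 (ne_of_lt hv1)⟩
    by_contra h
    push_neg at h
    have hgv : 0 < g v := by
      have hdcv : deriv c v ≤ 1 := by
        rw [← hc1]
        exact hmono (Set.mem_Ici.mpr hv.le) (by norm_num) hv1.le
      have heq : v / (v + v) ^ 2 = 1 / (4 * v) := by
        field_simp
        ring
      simp only [hgdef]
      rw [heq]
      have h14 : (1:ℝ) / 4 < 1 / (4 * v) :=
        div_lt_div_of_pos_left one_pos (by linarith) (by linarith)
      linarith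
    rcases eq_or_lt_of_le h with h' | h'
    · rw [h'] at key1; linarith
    · have := ganti (Set.mem_Ici.mpr hy) (Set.mem_Ici.mpr hv.le) h'
      linarith
  · intro hv1
    subst hv1
    have hg10 : g 1 = 0 := by rw [hg1]; norm_num
    by_contra h
    rcases lt_trichotomy y 1 with h' | h' | h'
    · have := ganti (Set.mem_Ici.mpr hy) (by norm_num) h'
      linarith
    · exact h h'
    · have := ganti (by norm_num : (1:ℝ) ∈ Set.Ici (0:ℝ)) (Set.mem_Ici.mpr hy) h'
      have := key2 (by linarith)
      linarith
  · intro hv1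
    exact hlt1 (ne_of_gt hv1)
end

section
/- Let c satisfy c(0)=0, c'(z) ≤ 1 for z ≤ 1, and c twice differentiable with c' > 0, c'' ≥ 0. If x₁, x₂ ∈ [1−ε, 1] with ε ∈ [0, 1/4], and BR(x₂) ∈ [1−ε, 1], then u₁(x₁, x₂) ≥ (1 − 3ε)·u₁(BR(x₂), x₂), where u₁(z, v) = z/(z+v) − (1/4)c(z). -/
/-- If `x₁, x₂ ∈ [1-ε, 1]` with `ε ∈ [0, 1/4]` and the best response `y` to
`x₂` lies in `[1-ε, 1]`, then `u x₁ x₂ ≥ (1 - 3ε) u y x₂`, where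
`u z v = z/(z+v) - (1/4) c z` and `c` satisfies `c 0 = 0`, `c' ≤ 1` on `[0,1]`,
`c' > 0`, `c'' ≥ 0`. -/
theorem stmt_5 (c : ℝ → ℝ) (hc : ContDiff ℝ 2 c)
    (hc0 : c 0 = 0)
    (hc'le : ∀ z, 0 ≤ z → z ≤ 1 → deriv c z ≤ 1)
    (hc'pos : ∀ z, 0 ≤ z → 0 < deriv c z)
    (hc'' : ∀ z, 0 ≤ z → 0 ≤ deriv (deriv c) z)
    (ε : ℝ) (hε0 : 0 ≤ ε) (hε : ε ≤ 1 / 4)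
    (x₁ x₂ y : ℝ)
    (hx₁ : x₁ ∈ Set.Icc (1 - ε) 1) (hx₂ : x₂ ∈ Set.Icc (1 - ε) 1)
    (hy : y ∈ Set.Icc (1 - ε) 1)
    (hmax : ∀ z, 0 ≤ z →
      z / (z + x₂) - (1 / 4) * c z ≤ y / (y + x₂) - (1 / 4) * c y) :
    (1 - 3 * ε) * (y / (y + x₂) - (1 / 4) * c y) ≤
      x₁ / (x₁ + x₂) - (1 / 4) * c x₁ := by
  obtain ⟨hx₁l, hx₁u⟩ := hx₁
  obtain ⟨hx₂l, hx₂u⟩ := hx₂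
  obtain ⟨hyl, hyu⟩ := hy
  have hx₂0 : (0:ℝ) ≤ x₂ := by linarith
  have hcd : Differentiable ℝ c := hc.differentiable (by simp)
  -- c 1 ≤ 1 via MVT
  have hc1 : c 1 ≤ 1 := by
    obtain ⟨ξ, hξ, hslope⟩ := exists_deriv_eq_slope c one_pos
      (hcd.continuous.continuousOn) (hcd.differentiableOn)
    have := hc'le ξ (le_of_lt hξ.1) (le_of_lt hξ.2)
    rw [hslope] at this
    simp [hc0] at this
    linarith
  -- lower bound on u y
  have huy : 1 / 4 ≤ y / (y + x₂) - (1 / 4) * c y := by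
    have h1 := hmax 1 one_pos.le
    have h2 : (1:ℝ) / 2 ≤ 1 / (1 + x₂) := by
      rw [div_le_div_iff₀ (by norm_num) (by linarith)]
      linarith
    have h3 : (1:ℝ) / 4 * c 1 ≤ 1 / 4 := by linarith
    linarith
  -- the utility function
  have hderiv : ∀ z ∈ Set.Icc (1 - ε) 1,
      HasDerivAt (fun w : ℝ => w / (w + x₂) - (1 / 4) * c w)
        (x₂ / (z + x₂) ^ 2 - (1 / 4) * deriv c z) z := by
    intro z hz
    have hzpos : (0:ℝ) < z + x₂ := by
      have := hz.1; linarith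
    have h1 : HasDerivAt (fun w : ℝ => w / (w + x₂)) (x₂ / (z + x₂) ^ 2) z := by
      have := (hasDerivAt_id z).div ((hasDerivAt_id z).add_const x₂) hzpos.ne'
      exact this.congr_deriv (by simp only [id]; ring)
    exact h1.sub (((hcd z).hasDerivAt).const_mul (1 / 4))
  have hbound : ∀ z ∈ Set.Icc (1 - ε) 1,
      ‖deriv (fun w : ℝ => w / (w + x₂) - (1 / 4) * c w) z‖ ≤ 4 / 9 := by
    intro z hz
    rw [(hderiv z hz).deriv, Real.norm_eq_abs, abs_le]
    have hz1 : 1 - ε ≤ z := hz.1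
    have hz2 : z ≤ 1 := hz.2
    have hzpos : (0:ℝ) ≤ z := by linarith
    have hA : (3:ℝ)/2 ≤ z + x₂ := by linarith
    have hB : x₂ / (z + x₂) ^ 2 ≤ 4 / 9 := by
      rw [div_le_div_iff₀ (by nlinarith) (by norm_num)]
      nlinarith
    have hC : 0 ≤ x₂ / (z + x₂) ^ 2 := div_nonneg hx₂0 (sq_nonneg _)
    have hD := hc'le z hzpos hz2
    have hE := (hc'pos z hzpos).le
    constructor <;> nlinarith
  have hdiff : ∀ z ∈ Set.Icc (1 - ε) 1,
      DifferentiableAt ℝ (fun w : ℝ => w / (w + x₂) - (1 / 4) * c w) z :=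
    fun z hz => (hderiv z hz).differentiableAt
  have hlip := (convex_Icc (1 - ε) 1).norm_image_sub_le_of_norm_deriv_le hdiff hbound
    ⟨hyl, hyu⟩ ⟨hx₁l, hx₁u⟩
  simp only [Real.norm_eq_abs] at hlip
  have habs : |x₁ - y| ≤ ε := by
    rw [abs_le]; constructor <;> linarith
  have hdiffle : (y / (y + x₂) - (1 / 4) * c y) - (x₁ / (x₁ + x₂) - (1 / 4) * c x₁)
      ≤ 4 / 9 * ε := by
    have h1 : (y / (y + x₂) - (1 / 4) * c y) - (x₁ / (x₁ + x₂) - (1 / 4) * c x₁)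
        ≤ |(x₁ / (x₁ + x₂) - (1 / 4) * c x₁) - (y / (y + x₂) - (1 / 4) * c y)| := by
      rw [abs_sub_comm]; exact le_abs_self _
    calc _ ≤ |(x₁ / (x₁ + x₂) - (1 / 4) * c x₁) - (y / (y + x₂) - (1 / 4) * c y)| := h1
      _ ≤ 4 / 9 * |x₁ - y| := hlip
      _ ≤ 4 / 9 * ε := by nlinarith [abs_nonneg (x₁ - y)]
  nlinarith [mul_nonneg hε0 (by linarith : (0:ℝ) ≤ y / (y + x₂) - (1 / 4) * c y - 1 / 4)]
end

section
/- Define, for z ∈ ℝⁿ, the potential f(z) = max(∑_{j : z_j > 0} z_j, −∑_{j : z_j < 0} z_j). If at time t coordinate i is replaced by z'_i = −β·∑_{j ≠ i} z_j for some β ∈ [0, B] with B < 1 (all other coordinates unchanged), then f(z') ≤ f(z). -/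
open Finset in
/-- One step of the discounted-sum dynamics never increases the potential
`f z = max (∑_{z_j > 0} z_j, -∑_{z_j < 0} z_j)`. -/
theorem stmt_6 (n : ℕ) (hn : 1 ≤ n) (z z' : Fin n → ℝ) (i : Fin n)
    (β B : ℝ) (hβ0 : 0 ≤ β) (hβB : β ≤ B) (hB : B < 1)
    (hi : z' i = -β * ∑ j ∈ univ.erase i, z j)
    (hne : ∀ j, j ≠ i → z' j = z j) :
    max (∑ j ∈ univ.filter (fun j => 0 < z' j), z' j)
        (-∑ j ∈ univ.filter (fun j => z' j < 0), z' j) ≤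
    max (∑ j ∈ univ.filter (fun j => 0 < z j), z j)
        (-∑ j ∈ univ.filter (fun j => z j < 0), z j) := by
  classical
  set Pi := ∑ j ∈ (univ.erase i).filter (fun j => 0 < z j), z j with hPidef
  set Ni := ∑ j ∈ (univ.erase i).filter (fun j => z j < 0), z j with hNidef
  set P := ∑ j ∈ univ.filter (fun j => 0 < z j), z j with hPdef
  set N := ∑ j ∈ univ.filter (fun j => z j < 0), z j with hNdef
  have hβ1 : β ≤ 1 := le_of_lt (lt_of_le_of_lt hβB hB)
  -- the sum over erase i splits into positive and negative parts
  have hs : ∑ j ∈ univ.erase i, z j = Pi + Ni := by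
    rw [hPidef, hNidef,
      ← Finset.sum_filter_add_sum_filter_not (univ.erase i) (fun j => 0 < z j)]
    congr 1
    refine (Finset.sum_subset ?_ ?_).symm
    · intro j hj
      simp only [Finset.mem_filter] at hj ⊢
      exact ⟨hj.1, by linarith [hj.2]⟩
    · intro j hj hj2
      simp only [Finset.mem_filter] at hj hj2
      have h1 : ¬ z j < 0 := fun h => hj2 ⟨hj.1, h⟩
      have h2 : ¬ 0 < z j := hj.2
      linarith [not_lt.mp h1, not_lt.mp h2]
  have hzi : z' i = -β * (Pi + Ni) := by rw [hi, hs]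
  have hPi0 : 0 ≤ Pi :=
    Finset.sum_nonneg fun j hj => le_of_lt (Finset.mem_filter.mp hj).2
  have hNi0 : Ni ≤ 0 :=
    Finset.sum_nonpos fun j hj => le_of_lt (Finset.mem_filter.mp hj).2
  have hPiP : Pi ≤ P := by
    apply Finset.sum_le_sum_of_subset_of_nonneg
    · exact Finset.filter_subset_filter _ (Finset.erase_subset _ _)
    · intro j hj _
      exact le_of_lt (Finset.mem_filter.mp hj).2
  have hNNi : N ≤ Ni := by
    have h := Finset.sum_le_sum_of_subset_of_nonneg
      (f := fun j => -z j)
      (Finset.filter_subset_filter (fun j => z j < 0) (Finset.erase_subset i univ))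
      (fun j hj _ => by
        have := (Finset.mem_filter.mp hj).2
        show (0:ℝ) ≤ -z j
        linarith)
    simp only [Finset.sum_neg_distrib] at h
    linarith
  have hPM : Pi ≤ max P (-N) := le_trans hPiP (le_max_left _ _)
  have hNM : -Ni ≤ max P (-N) := le_trans (by linarith) (le_max_right _ _)
  -- split the new sums at i
  have hP' : ∑ j ∈ univ.filter (fun j => 0 < z' j), z' j
      = (if 0 < z' i then z' i else 0) + Pi := by
    rw [Finset.sum_filter, ← Finset.add_sum_erase univ _ (Finset.mem_univ i)]
    congr 1
    rw [hPidef, Finset.sum_filter]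
    apply Finset.sum_congr rfl
    intro j hj
    rw [hne j (Finset.ne_of_mem_erase hj)]
  have hN' : ∑ j ∈ univ.filter (fun j => z' j < 0), z' j
      = (if z' i < 0 then z' i else 0) + Ni := by
    rw [Finset.sum_filter, ← Finset.add_sum_erase univ _ (Finset.mem_univ i)]
    congr 1
    rw [hNidef, Finset.sum_filter]
    apply Finset.sum_congr rfl
    intro j hj
    rw [hne j (Finset.ne_of_mem_erase hj)]
  rw [hP', hN']
  apply max_le
  · split_ifs with h
    · nlinarith [mul_nonneg (sub_nonneg.mpr hβ1) (sub_nonneg.mpr hPM),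
        mul_nonneg hβ0 (by linarith : (0:ℝ) ≤ max P (-N) + Ni)]
    · linarith
  · split_ifs with h
    · nlinarith [mul_nonneg (sub_nonneg.mpr hβ1) (by linarith : (0:ℝ) ≤ max P (-N) + Ni),
        mul_nonneg hβ0 (sub_nonneg.mpr hPM)]
    · linarith
end

section
/- In the discounted-sum dynamics with best-case coordinate selection: let V = ∑_{j:z_j>0} z_j, W = −∑_{j:z_j<0} z_j, with V ≥ W and f(z) = V > 0. Choose i maximizing z_i among positive coordinates, so z_i ≥ V/n. If W ≤ V − z_i, then after updating z'_i = −β·∑_{j≠i}z_j with β ∈ [0,B], B < 1, we have f(z') ≤ (1 − 1/n)·f(z). -/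
open Finset in
/-- Best-case step of the discounted-sum dynamics: if `V ≥ W`, `f z = V > 0`,
`z i ≥ V/n` with `z i > 0`, and `W ≤ V - z i`, then after updating coordinate
`i` to `-β ∑_{j≠i} z j` with `β ∈ [0,B]`, `B < 1`, the potential drops by a
factor `(1 - 1/n)`. -/
theorem stmt_8 (n : ℕ) (hn : 1 ≤ n) (z z' : Fin n → ℝ) (i : Fin n)
    (β B : ℝ) (hβ0 : 0 ≤ β) (hβB : β ≤ B) (hB : B < 1)
    (V W : ℝ)
    (hV : V = ∑ j ∈ univ.filter (fun j => 0 < z j), z j)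
    (hW : W = -∑ j ∈ univ.filter (fun j => z j < 0), z j)
    (hVW : W ≤ V) (hVpos : 0 < V)
    (hzi : 0 < z i) (hbig : V / n ≤ z i)
    (hcase : W ≤ V - z i)
    (hi : z' i = -β * ∑ j ∈ univ.erase i, z j)
    (hne : ∀ j, j ≠ i → z' j = z j) :
    max (∑ j ∈ univ.filter (fun j => 0 < z' j), z' j)
        (-∑ j ∈ univ.filter (fun j => z' j < 0), z' j) ≤
      (1 - 1 / n) * max V W := by
  have hmax : max V W = V := max_eq_left hVW
  have hsum : ∑ j, z j = V - W := by
    have h1 := Finset.sum_filter_add_sum_filter_not univ (fun j => 0 < z j) z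
    have h2 : ∑ j ∈ univ.filter (fun j => ¬ 0 < z j), z j
        = ∑ j ∈ univ.filter (fun j => z j < 0), z j := by
      symm
      apply Finset.sum_subset
      · intro j hj; simp only [Finset.mem_filter, Finset.mem_univ, true_and] at hj ⊢
        linarith
      · intro j hj hnj; simp only [Finset.mem_filter, Finset.mem_univ, true_and] at hj hnj
        linarith
    rw [h2] at h1
    rw [hV, hW]; linarith
  set S : ℝ := ∑ j ∈ univ.erase i, z j with hS
  have hSval : S = V - z i - W := by
    have h3 := Finset.add_sum_erase univ z (Finset.mem_univ i)
    rw [← hS] at h3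
    linarith [hsum]
  have hSnn : 0 ≤ S := by rw [hSval]; linarith
  have hzi' : z' i ≤ 0 := by rw [hi]; nlinarith
  have hiP : i ∈ univ.filter (fun j => 0 < z j) := by
    simp only [Finset.mem_filter, Finset.mem_univ, true_and]; exact hzi
  have hPos : ∑ j ∈ univ.filter (fun j => 0 < z' j), z' j = V - z i := by
    have hset : univ.filter (fun j => 0 < z' j)
        = (univ.filter (fun j => 0 < z j)).erase i := by
      ext j
      simp only [Finset.mem_filter, Finset.mem_erase, Finset.mem_univ, true_and]
      constructor
      · intro hj
        have hji : j ≠ i := by rintro rfl; linarith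
        exact ⟨hji, by rwa [← hne j hji]⟩
      · rintro ⟨hji, hjz⟩; rwa [hne j hji]
    rw [hset]
    rw [Finset.sum_congr rfl (fun j hj => hne j (Finset.ne_of_mem_erase hj))]
    rw [Finset.sum_erase_eq_sub hiP, ← hV]
  have hiN : i ∉ univ.filter (fun j => z j < 0) := by
    simp only [Finset.mem_filter, Finset.mem_univ, true_and]; linarith
  have hNeg : -∑ j ∈ univ.filter (fun j => z' j < 0), z' j ≤ W + β * S := by
    have hβS : 0 ≤ β * S := mul_nonneg hβ0 hSnn
    rcases lt_or_eq_of_le hzi' with hlt | heq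
    · have hset : univ.filter (fun j => z' j < 0)
          = insert i (univ.filter (fun j => z j < 0)) := by
        ext j
        simp only [Finset.mem_filter, Finset.mem_insert, Finset.mem_univ, true_and]
        by_cases hji : j = i
        · subst hji; simp [hlt]
        · rw [hne j hji]; simp [hji]
      rw [hset, Finset.sum_insert hiN]
      rw [Finset.sum_congr rfl (fun j hj => hne j (by rintro rfl; exact hiN hj))]
      linarith [hW]
    · have hset : univ.filter (fun j => z' j < 0)
          = univ.filter (fun j => z j < 0) := by
        ext j
        simp only [Finset.mem_filter, Finset.mem_univ, true_and]
        by_cases hji : j = i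
        · subst hji; constructor
          · intro h; linarith
          · intro h; linarith
        · rw [hne j hji]
      rw [hset]
      rw [Finset.sum_congr rfl (fun j hj => hne j (by rintro rfl; exact hiN hj))]
      linarith [hW]
  have hn' : (1:ℝ) ≤ (n:ℝ) := by exact_mod_cast hn
  have hkey : V - z i ≤ (1 - 1 / n) * V := by
    have : (1 - 1 / (n:ℝ)) * V = V - V / n := by field_simp
    rw [this]; linarith
  rw [hmax]
  apply max_le
  · rw [hPos]; exact hkey
  · have : β * S ≤ S := by nlinarith
    calc -∑ j ∈ univ.filter (fun j => z' j < 0), z' j ≤ W + β * S := hNeg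
    _ ≤ V - z i := by linarith [hSval]
    _ ≤ (1 - 1/n) * V := hkey
end

section
/- Let n ≥ 3, γ > 0, and define s_t by s_0 = γ and s_{t+1} ≤ n·√(s_t) (with s_t > 0). Then s_t ≤ n²·γ^{1/2^t} for all t ≥ 0; consequently, if t < log₂(log₂(1/γ)) − log₂(log₂(2n)), then s_t < n/2. -/
/-- If `n ≥ 3`, `γ ∈ (0,1)`, `s 0 = γ`, `s t > 0`, and `s (t+1) ≤ n √(s t)`,
then `s t ≤ n² γ^(1/2^t)`; consequently, for all
`t < log₂ (log₂ (1/γ)) - log₂ (log₂ (2n))`, `s t < n/2`. -/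
theorem stmt_16 (n : ℕ) (hn : 3 ≤ n) (γ : ℝ) (hγ0 : 0 < γ) (hγ1 : γ < 1)
    (s : ℕ → ℝ) (hs0 : s 0 = γ) (hpos : ∀ t, 0 < s t)
    (hrec : ∀ t, s (t + 1) ≤ (n : ℝ) * Real.sqrt (s t)) :
    (∀ t : ℕ, s t ≤ (n : ℝ) ^ 2 * γ ^ (1 / (2 : ℝ) ^ t)) ∧
    (∀ t : ℕ, (t : ℝ) < Real.logb 2 (Real.logb 2 (1 / γ)) -
        Real.logb 2 (Real.logb 2 (2 * n)) → s t < (n : ℝ) / 2) := by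
  have hn0 : (0:ℝ) < n := by positivity
  have h1 : ∀ t : ℕ, s t ≤ (n : ℝ) ^ 2 * γ ^ (1 / (2 : ℝ) ^ t) := by
    intro t
    induction t with
    | zero =>
      simp only [pow_zero, div_one, Real.rpow_one, hs0]
      have hn3 : (3:ℝ) ≤ (n:ℝ) := by exact_mod_cast hn
      have hn1 : (1:ℝ) ≤ (n:ℝ)^2 := by nlinarith
      nlinarith
    | succ t ih =>
      have hrp : (0:ℝ) < γ ^ (1 / (2 : ℝ) ^ t) := Real.rpow_pos_of_pos hγ0 _
      calc s (t+1) ≤ (n:ℝ) * Real.sqrt (s t) := hrec t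
        _ ≤ (n:ℝ) * Real.sqrt ((n:ℝ)^2 * γ ^ (1/(2:ℝ)^t)) := by
            gcongr
        _ = (n:ℝ)^2 * γ ^ (1/(2:ℝ)^(t+1)) := by
            rw [Real.sqrt_mul (by positivity), Real.sqrt_sq hn0.le,
              Real.sqrt_eq_rpow, ← Real.rpow_mul hγ0.le]
            rw [show 1 / (2:ℝ)^t * (1/2) = 1 / (2:ℝ)^(t+1) by
              rw [pow_succ]; ring]
            ring
  refine ⟨h1, fun t ht => ?_⟩
  set L : ℝ := Real.logb 2 (2 * n) with hL
  have hn3 : (3:ℝ) ≤ (n:ℝ) := by exact_mod_cast hn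
  have h2n : (1:ℝ) < 2 * n := by linarith
  have hLpos : 0 < L := Real.logb_pos one_lt_two h2n
  have hginv : (1:ℝ) < 1 / γ := (one_lt_div hγ0).mpr hγ1
  have hlg : 0 < Real.logb 2 (1/γ) := Real.logb_pos one_lt_two hginv
  -- from ht: t + logb 2 L < logb 2 (logb 2 (1/γ))
  have ht' : (t:ℝ) + Real.logb 2 L < Real.logb 2 (Real.logb 2 (1/γ)) := by linarith
  have step1 : (2:ℝ)^(t:ℝ) * L < Real.logb 2 (1/γ) := by
    have := (Real.rpow_lt_rpow_left_iff (x := (2:ℝ)) one_lt_two).mpr ht'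
    rwa [Real.rpow_add two_pos, Real.rpow_logb two_pos (by norm_num) hLpos,
      Real.rpow_logb two_pos (by norm_num) hlg] at this
  have step2 : ((2:ℝ) * n) ^ ((2:ℝ)^(t:ℝ)) < 1/γ := by
    have := (Real.rpow_lt_rpow_left_iff (x := (2:ℝ)) one_lt_two).mpr step1
    rwa [Real.rpow_logb two_pos (by norm_num) (by linarith), mul_comm,
      Real.rpow_mul (by norm_num), Real.rpow_logb two_pos (by norm_num) (by linarith)] at this
  -- so γ < (2n)^(-2^t), hence γ^(1/2^t) < 1/(2n)
  have h2npos : (0:ℝ) < 2 * n := by linarith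
  have hγlt : γ < ((2:ℝ) * n) ^ (-(2:ℝ)^(t:ℝ)) := by
    rw [Real.rpow_neg h2npos.le, lt_inv_comm₀ hγ0 (Real.rpow_pos_of_pos h2npos _)]
    rwa [← one_div]
  have hexp : (0:ℝ) < 1 / (2:ℝ)^t := by positivity
  have key : γ ^ (1 / (2:ℝ)^t) < 1 / (2 * n) := by
    have h2t : ((2:ℝ)^t : ℝ) = (2:ℝ)^(t:ℝ) := (Real.rpow_natCast 2 t).symm
    calc γ ^ (1 / (2:ℝ)^t)
        < (((2:ℝ) * n) ^ (-(2:ℝ)^(t:ℝ))) ^ (1 / (2:ℝ)^t) := by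
          exact Real.rpow_lt_rpow hγ0.le hγlt hexp
      _ = 1 / (2 * n) := by
          rw [← Real.rpow_natCast (2:ℝ) t] at *
          rw [← Real.rpow_mul h2npos.le]
          rw [show -(2:ℝ)^(t:ℝ) * (1/(2:ℝ)^(t:ℝ)) = -1 by
            field_simp]
          rw [Real.rpow_neg_one]
          exact (one_div _).symm
  have := h1 t
  have : s t < (n:ℝ)^2 * (1 / (2 * n)) := by
    calc s t ≤ (n:ℝ)^2 * γ ^ (1 / (2:ℝ)^t) := h1 t
      _ < (n:ℝ)^2 * (1 / (2 * n)) := by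
        exact mul_lt_mul_of_pos_left key (by positivity)
  calc s t < (n:ℝ)^2 * (1 / (2 * n)) := this
    _ = (n:ℝ)/2 := by field_simp
end

section
/- Let n ≥ 2 and u(z, s) = z/(z+s) − ((n−1)/n²)·c(z), where c is twice differentiable, increasing, convex, c(0)=0, c'(1)=1. Suppose ε ∈ [0,1], x ∈ [1−ε, 1+ε], s ∈ [n−1−ε, n−1+ε], and |c(y) − c(y')| ≤ K|y − y'| for y, y' ∈ [1−ε, 1+ε] with K ≥ 1. Let y* ∈ [1−ε, 1+ε]. Then u(x, s) ≥ (1 − 2(1+K)n·ε)·u(y*, s), provided 2(1+K)n·ε ≤ 1. -/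
/-- Lipschitzness of the utility near equilibrium: for `n ≥ 2`,
`u z s = z/(z+s) - ((n-1)/n²) c z` with `c` twice differentiable, increasing,
convex, `c 0 = 0`, `c' 1 = 1`, `K`-Lipschitz on `[1-ε,1+ε]` with `K ≥ 1`:
if `x ∈ [1-ε,1+ε]`, `s ∈ [n-1-ε,n-1+ε]`, `y* ∈ [1-ε,1+ε]`, and
`2(1+K)nε ≤ 1`, then `u x s ≥ (1 - 2(1+K)nε) u y* s`. -/
theorem stmt_17 (n : ℕ) (hn : 2 ≤ n) (c : ℝ → ℝ) (hc : ContDiff ℝ 2 c)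
    (hc0 : c 0 = 0)
    (hc' : ∀ z, 0 ≤ z → 0 < deriv c z)
    (hc'' : ∀ z, 0 ≤ z → 0 ≤ deriv (deriv c) z)
    (hc1 : deriv c 1 = 1)
    (ε K : ℝ) (hε0 : 0 ≤ ε) (hε1 : ε ≤ 1) (hK : 1 ≤ K)
    (hLip : ∀ y ∈ Set.Icc (1 - ε) (1 + ε), ∀ y' ∈ Set.Icc (1 - ε) (1 + ε),
      |c y - c y'| ≤ K * |y - y'|)
    (x s ystar : ℝ)
    (hx : x ∈ Set.Icc (1 - ε) (1 + ε))
    (hs : s ∈ Set.Icc ((n : ℝ) - 1 - ε) ((n : ℝ) - 1 + ε))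
    (hystar : ystar ∈ Set.Icc (1 - ε) (1 + ε))
    (hsmall : 2 * (1 + K) * n * ε ≤ 1) :
    (1 - 2 * (1 + K) * n * ε) *
        (ystar / (ystar + s) - (((n : ℝ) - 1) / n ^ 2) * c ystar) ≤
      x / (x + s) - (((n : ℝ) - 1) / n ^ 2) * c x := by
  obtain ⟨hx1, hx2⟩ := hx
  obtain ⟨hs1, hs2⟩ := hs
  obtain ⟨hy1, hy2⟩ := hystar
  have hN : (2:ℝ) ≤ (n:ℝ) := by exact_mod_cast hn
  set N : ℝ := (n:ℝ) with hNdef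
  have hε8 : 8 * ε ≤ 1 := by
    nlinarith [mul_nonneg hε0 (mul_nonneg (by linarith : (0:ℝ) ≤ K-1) (by linarith : (0:ℝ) ≤ N)),
      mul_nonneg hε0 (by linarith : (0:ℝ) ≤ N-2)]
  have hNpos : (0:ℝ) < N := by linarith
  have h1mem : (1:ℝ) ∈ Set.Icc (1-ε) (1+ε) := ⟨by linarith, by linarith⟩
  have hcx : |c x - c 1| ≤ K * ε := by
    calc |c x - c 1| ≤ K * |x - 1| := hLip x ⟨hx1, hx2⟩ 1 h1mem
    _ ≤ K * ε := by
        apply mul_le_mul_of_nonneg_left _ (by linarith)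
        rw [abs_le]; constructor <;> linarith
  have hcy : |c ystar - c 1| ≤ K * ε := by
    calc |c ystar - c 1| ≤ K * |ystar - 1| := hLip ystar ⟨hy1, hy2⟩ 1 h1mem
    _ ≤ K * ε := by
        apply mul_le_mul_of_nonneg_left _ (by linarith)
        rw [abs_le]; constructor <;> linarith
  have hcxle : c x ≤ c 1 + K*ε := by have := abs_le.mp hcx; linarith [this.2]
  have hcyge : c 1 - K*ε ≤ c ystar := by have := abs_le.mp hcy; linarith [this.1]
  -- c 1 ≤ 1 via MVT and monotonicity of deriv c
  have hdiff : Differentiable ℝ c := hc.differentiable (by norm_num)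
  have hc'cd : ContDiff ℝ 1 (deriv c) := by
    have h2 : ContDiff ℝ ((1:ℕ) + 1) c := by norm_num; exact hc
    exact (contDiff_succ_iff_deriv.mp h2).2.2
  have hmono : MonotoneOn (deriv c) (Set.Icc (0:ℝ) 1) := by
    apply monotoneOn_of_deriv_nonneg (convex_Icc 0 1)
      (hc'cd.continuous.continuousOn)
    · exact fun z _ => ((hc'cd.differentiable one_ne_zero) z).differentiableWithinAt
    · intro z hz
      rw [interior_Icc] at hz
      exact hc'' z hz.1.le
  have hc1le : c 1 ≤ 1 := by
    obtain ⟨ξ, hξ, hslope⟩ := exists_deriv_eq_slope c (by norm_num : (0:ℝ) < 1)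
      hdiff.continuous.continuousOn hdiff.differentiableOn
    have hle : deriv c ξ ≤ deriv c 1 :=
      hmono ⟨hξ.1.le, hξ.2.le⟩ ⟨by norm_num, le_rfl⟩ hξ.2.le
    rw [hslope, hc0, hc1] at hle
    simpa using hle
  have hspos : (0:ℝ) < s := by linarith
  have hxspos : (0:ℝ) < x + s := by linarith
  have hyspos : (0:ℝ) < ystar + s := by linarith
  have hshx : (1-ε)/N ≤ x/(x+s) := by
    rw [div_le_div_iff₀ hNpos hxspos]
    nlinarith
  have hshy : ystar/(ystar+s) ≤ (1+ε)/N := by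
    rw [div_le_div_iff₀ hyspos hNpos]
    nlinarith
  have ha0 : (0:ℝ) ≤ (N-1)/N^2 := div_nonneg (by linarith) (by positivity)
  have hL : (1-ε)/N - (N-1)/N^2 * (c 1 + K*ε) ≤ x/(x+s) - (N-1)/N^2 * c x := by
    have := mul_le_mul_of_nonneg_left hcxle ha0
    linarith
  have hU : ystar/(ystar+s) - (N-1)/N^2 * c ystar ≤ (1+ε)/N - (N-1)/N^2 * (c 1 - K*ε) := by
    have := mul_le_mul_of_nonneg_left hcyge ha0
    linarith
  have hδ0 : (0:ℝ) ≤ 1 - 2*(1+K)*N*ε := by linarith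
  have key : (1 - 2*(1+K)*N*ε) * ((1+ε)/N - (N-1)/N^2*(c 1 - K*ε))
      ≤ (1-ε)/N - (N-1)/N^2*(c 1 + K*ε) := by
    rw [← sub_nonneg]
    have hN2 : (0:ℝ) < N^2 := by positivity
    have expand : (1-ε)/N - (N-1)/N^2*(c 1 + K*ε) -
        (1 - 2*(1+K)*N*ε) * ((1+ε)/N - (N-1)/N^2*(c 1 - K*ε))
        = ((1-ε)*N - (N-1)*(c 1 + K*ε) -
          (1 - 2*(1+K)*N*ε) * ((1+ε)*N - (N-1)*(c 1 - K*ε))) / N^2 := by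
      field_simp
    rw [expand]
    have hKnn : (0:ℝ) ≤ K := by linarith
    have hδnn : (0:ℝ) ≤ 2*(1+K)*N*ε :=
      mul_nonneg (mul_nonneg (mul_nonneg (by norm_num) (by linarith)) hNpos.le) hε0
    have hA : (0:ℝ) ≤ (2*(1+K)*N*ε) * ((N-1)*(1 - c 1)) :=
      mul_nonneg hδnn (mul_nonneg (by linarith) (by linarith))
    have h2 : (0:ℝ) ≤ ε * K := mul_nonneg hε0 hKnn
    have h3 : (0:ℝ) ≤ (ε*ε) * ((1+K)*(N*N)) :=
      mul_nonneg (mul_nonneg hε0 hε0) (mul_nonneg (by linarith) (mul_nonneg hNpos.le hNpos.le))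
    have h4 : (0:ℝ) ≤ (ε*ε) * ((1+K)*((N-1)*(K*N))) :=
      mul_nonneg (mul_nonneg hε0 hε0)
        (mul_nonneg (by linarith) (mul_nonneg (by linarith) (mul_nonneg hKnn hNpos.le)))
    apply div_nonneg _ hN2.le
    linarith [hA, h2, h3, h4]
  calc (1 - 2*(1+K)*N*ε) * (ystar/(ystar+s) - (N-1)/N^2 * c ystar)
      ≤ (1 - 2*(1+K)*N*ε) * ((1+ε)/N - (N-1)/N^2*(c 1 - K*ε)) :=
        mul_le_mul_of_nonneg_left hU hδ0
    _ ≤ (1-ε)/N - (N-1)/N^2*(c 1 + K*ε) := key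
    _ ≤ x/(x+s) - (N-1)/N^2 * c x := hL
end
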